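/- Response model error, farsighted-form bound. Fix a leader policy π with quantal response ν^π, and suppose B_A > 0 satisfies ‖A_h^π‖_∞ ≤ B_A and ‖Ã_h‖_∞ ≤ B_A for all h = 1,…,H. With Δ̃_h⁽¹⁾(s,b) = (E_{s,b} − E_s)[ Σ_{l=h}^H γ^{l−h}·(Q̃_l − r_l^π − γ·P_l^π Ṽ_{l+1})(s_l,b_l) ] and (P_l^π Ṽ_{l+1})(s,b) = Σ_{s'} P_l^π(s'|s,b)·Ṽ_{l+1}(s'), it holds that Σ_{h=1}^H H·E^{π,ν^π}[ ‖(ν̃_h − ν_h^π)(·|s_h)‖₁ ] ≤ C⁽⁰⁾·Σ_{h=1}^H E^{π,ν^π}[ |Δ̃_h⁽¹⁾(s_h,b_h)| ] + C⁽²⁾·max_{h∈[H]} E^{π,ν^π}[ ((Q̃_h − r_h^π − γ·P_h^π Ṽ_{h+1})(s_h,b_h))² ], where C⁽⁰⁾ = 2ηH and C⁽²⁾ = 2·η²·H²·exp(6ηB_A)·(1 + 4·eff_H(γ))·(eff_H(exp(2ηB_A)·γ))². -/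

import Mathlib

open Finset

noncomputable section

namespace QSE

variable {S A B : Type}

/-- Follower reward under the leader policy: `r_h^π(s,b) = Σ_a π_h(a|s,b) r_h(s,a,b)`. -/
def rPol [Fintype A] (pol : ℕ → S → B → A → ℝ) (r : ℕ → S → A → B → ℝ)
    (h : ℕ) (s : S) (b : B) : ℝ :=
  ∑ a, pol h s b a * r h s a b

/-- Transition under the leader policy: `P_h^π(s'|s,b) = Σ_a π_h(a|s,b) P_h(s'|s,a,b)`. -/
def pPol [Fintype A] (pol : ℕ → S → B → A → ℝ) (P : ℕ → S → A → B → S → ℝ)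
    (h : ℕ) (s : S) (b : B) (s' : S) : ℝ :=
  ∑ a, pol h s b a * P h s a b s'

/-- Fuel-indexed soft state value: `vAux n = V_{H−n}^π` (steps are 0-based, `V_H ≡ 0`). -/
def vAux [Fintype S] [Fintype A] [Fintype B] (η γ : ℝ) (H : ℕ)
    (pol : ℕ → S → B → A → ℝ) (r : ℕ → S → A → B → ℝ)
    (P : ℕ → S → A → B → S → ℝ) : ℕ → S → ℝ
  | 0, _ => 0
  | n + 1, s =>
      η⁻¹ * Real.log (∑ b, Real.exp (η * (rPol pol r (H - (n + 1)) s b +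
        γ * ∑ s', pPol pol P (H - (n + 1)) s b s' * vAux η γ H pol r P n s')))

/-- Follower soft state value `V_h^π` (0-based step `h`, so `V_H ≡ 0`). -/
def softV [Fintype S] [Fintype A] [Fintype B] (η γ : ℝ) (H : ℕ)
    (pol : ℕ → S → B → A → ℝ) (r : ℕ → S → A → B → ℝ)
    (P : ℕ → S → A → B → S → ℝ) (h : ℕ) (s : S) : ℝ :=
  vAux η γ H pol r P (H - h) s

/-- Follower soft action value `Q_h^π(s,b) = r_h^π(s,b) + γ Σ_{s'} P_h^π(s'|s,b) V_{h+1}^π(s')`. -/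
def softQ [Fintype S] [Fintype A] [Fintype B] (η γ : ℝ) (H : ℕ)
    (pol : ℕ → S → B → A → ℝ) (r : ℕ → S → A → B → ℝ)
    (P : ℕ → S → A → B → S → ℝ) (h : ℕ) (s : S) (b : B) : ℝ :=
  rPol pol r h s b + γ * ∑ s', pPol pol P h s b s' * softV η γ H pol r P (h + 1) s'

/-- Follower advantage `A_h^π = Q_h^π − V_h^π`. -/
def softA [Fintype S] [Fintype A] [Fintype B] (η γ : ℝ) (H : ℕ)
    (pol : ℕ → S → B → A → ℝ) (r : ℕ → S → A → B → ℝ)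
    (P : ℕ → S → A → B → S → ℝ) (h : ℕ) (s : S) (b : B) : ℝ :=
  softQ η γ H pol r P h s b - softV η γ H pol r P h s

/-- Quantal response `ν_h^π(b|s) = exp(η A_h^π(s,b))`. -/
def qr [Fintype S] [Fintype A] [Fintype B] (η γ : ℝ) (H : ℕ)
    (pol : ℕ → S → B → A → ℝ) (r : ℕ → S → A → B → ℝ)
    (P : ℕ → S → A → B → S → ℝ) (h : ℕ) (s : S) (b : B) : ℝ :=
  Real.exp (η * softA η γ H pol r P h s b)

/-- Marginal law of the state `s_h` along the trajectory generated by `(ρ₀, ν, π, P)`. -/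
def margS [Fintype S] [Fintype A] [Fintype B] (rho0 : S → ℝ)
    (pol : ℕ → S → B → A → ℝ) (nu : ℕ → S → B → ℝ)
    (P : ℕ → S → A → B → S → ℝ) : ℕ → S → ℝ
  | 0, s => rho0 s
  | h + 1, s' => ∑ s, ∑ b, ∑ a,
      margS rho0 pol nu P h s * nu h s b * pol h s b a * P h s a b s'

/-- Integral operator `(T_h^{π,ν} f)(s) = Σ_{a,b} π_h(a|s,b) ν_h(b|s) f(s,a,b)`. -/
def Top [Fintype A] [Fintype B] (pol : ℕ → S → B → A → ℝ) (nu : ℕ → S → B → ℝ)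
    (h : ℕ) (f : S → A → B → ℝ) (s : S) : ℝ :=
  ∑ b, ∑ a, nu h s b * pol h s b a * f s a b

/-- Leader's value `J(π) = E^{π,ν^π}[Σ_{h<H} u_h(s_h,a_h,b_h)]`. -/
def Jval [Fintype S] [Fintype A] [Fintype B] (η γ : ℝ) (H : ℕ) (rho0 : S → ℝ)
    (pol : ℕ → S → B → A → ℝ) (r : ℕ → S → A → B → ℝ)
    (P : ℕ → S → A → B → S → ℝ) (u : ℕ → S → A → B → ℝ) : ℝ :=
  ∑ h ∈ Finset.range H, ∑ s, ∑ b, ∑ a,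
    margS rho0 pol (qr η γ H pol r P) P h s * qr η γ H pol r P h s b *
      pol h s b a * u h s a b

/-- Fuel-indexed conditional discounted cumulative value:
`cumAux n s b = E[Σ_{l=H−n}^{H−1} γ^{l−(H−n)} X_l(s_l,b_l) | s_{H−n} = s, b_{H−n} = b]`. -/
def cumAux [Fintype S] [Fintype A] [Fintype B] (γ : ℝ) (H : ℕ)
    (pol : ℕ → S → B → A → ℝ) (nu : ℕ → S → B → ℝ)
    (P : ℕ → S → A → B → S → ℝ) (X : ℕ → S → B → ℝ) : ℕ → S → B → ℝ
  | 0, _, _ => 0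
  | n + 1, s, b => X (H - (n + 1)) s b +
      γ * ∑ a, pol (H - (n + 1)) s b a * ∑ s', P (H - (n + 1)) s a b s' *
          ∑ b', nu (H - n) s' b' * cumAux γ H pol nu P X n s' b'

/-- `cumSB h s b = E[Σ_{l=h}^{H−1} γ^{l−h} X_l(s_l,b_l) | s_h = s, b_h = b]`. -/
def cumSB [Fintype S] [Fintype A] [Fintype B] (γ : ℝ) (H : ℕ)
    (pol : ℕ → S → B → A → ℝ) (nu : ℕ → S → B → ℝ)
    (P : ℕ → S → A → B → S → ℝ) (X : ℕ → S → B → ℝ) (h : ℕ) (s : S) (b : B) : ℝ :=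
  cumAux γ H pol nu P X (H - h) s b

/-- Estimated soft state value `Ṽ_h` derived from `Q̃` (with `Ṽ_H ≡ 0`). -/
def vTil [Fintype B] (η : ℝ) (H : ℕ) (Qt : ℕ → S → B → ℝ) (h : ℕ) (s : S) : ℝ :=
  if h < H then η⁻¹ * Real.log (∑ b, Real.exp (η * Qt h s b)) else 0

/-- Estimated advantage `Ã_h = Q̃_h − Ṽ_h`. -/
def aTil [Fintype B] (η : ℝ) (H : ℕ) (Qt : ℕ → S → B → ℝ) (h : ℕ) (s : S) (b : B) : ℝ :=
  Qt h s b - vTil η H Qt h s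

/-- Estimated quantal response `ν̃_h(b|s) = exp(η Ã_h(s,b))`. -/
def nuTil [Fintype B] (η : ℝ) (H : ℕ) (Qt : ℕ → S → B → ℝ) (h : ℕ) (s : S) (b : B) : ℝ :=
  Real.exp (η * aTil η H Qt h s b)

/-- Follower Bellman residual `(Q̃_h − r_h^π − γ P_h^π Ṽ_{h+1})(s,b)`. -/
def bres [Fintype S] [Fintype A] [Fintype B] (η γ : ℝ) (H : ℕ)
    (pol : ℕ → S → B → A → ℝ) (r : ℕ → S → A → B → ℝ)
    (P : ℕ → S → A → B → S → ℝ) (Qt : ℕ → S → B → ℝ) (h : ℕ) (s : S) (b : B) : ℝ :=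
  Qt h s b - rPol pol r h s b - γ * ∑ s', pPol pol P h s b s' * vTil η H Qt (h + 1) s'

/-- First-order quantal response error
`Δ̃_h⁽¹⁾(s,b) = (E_{s,b} − E_s)[Σ_{l=h}^{H−1} γ^{l−h}(Q̃_l − r_l^π − γ P_l^π Ṽ_{l+1})(s_l,b_l)]`. -/
def del1 [Fintype S] [Fintype A] [Fintype B] (η γ : ℝ) (H : ℕ)
    (pol : ℕ → S → B → A → ℝ) (r : ℕ → S → A → B → ℝ)
    (P : ℕ → S → A → B → S → ℝ) (Qt : ℕ → S → B → ℝ) (h : ℕ) (s : S) (b : B) : ℝ :=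
  cumSB γ H pol (qr η γ H pol r P) P (bres η γ H pol r P Qt) h s b -
    ∑ b', qr η γ H pol r P h s b' *
      cumSB γ H pol (qr η γ H pol r P) P (bres η γ H pol r P Qt) h s b'

/-- Geometric sum `eff_H(x) = Σ_{i<H} x^i`. -/
def effH (H : ℕ) (x : ℝ) : ℝ := ∑ i ∈ Finset.range H, x ^ i

end QSE

open QSE

/-!
Write `D = Ã - A` for the advantage gap and `Z = Ṽ - V` for the value gap, so that
`ν̃ = ν exp (η D)` and `‖ν̃ - ν‖₁ ≤ 2 η E_ν |D|`. Unrolling the Bellman residual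
`ε = Q̃ - r^π - γ P^π Ṽ` gives `D = Δ̃⁽¹⁾ + γ P^π W_{h+1} - W_h`, where the remainder
`W = Z - E_ν[Σ_l γ^{l-h} ε_l]` accumulates the nonnegative divergences `-E_ν[D] = KL(ν ‖ ν̃) / η`,
each at most `(η/2) e^{2ηB_A} E_ν[D²]`. Since `ν̃ ≤ e^{2ηB_A} ν`, `|D|` is dominated by the return
of `|ε|` discounted at `e^{2ηB_A} γ`, whose second moment Minkowski's inequality bounds by
`eff_H(e^{2ηB_A} γ)²` times the largest per-step second moment of `ε`.
-/

namespace QSE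

theorem exp_sub_one_sub_le {t c : ℝ} (htc : t ≤ c) (hc : 0 ≤ c) :
    Real.exp t - 1 - t ≤ t ^ 2 / 2 * Real.exp c := by
  rcases eq_or_ne t 0 with rfl | ht
  · simp
  obtain ⟨x, hx, hrem⟩ := taylor_mean_remainder_lagrange_iteratedDeriv (f := Real.exp) (n := 1)
    ht.symm Real.contDiff_exp.contDiffOn
  rw [taylor_within_apply] at hrem
  simp only [Finset.sum_range_succ, Finset.sum_range_zero, iteratedDerivWithin_zero,
    iteratedDerivWithin_one, (Real.hasDerivAt_exp 0).hasDerivWithinAt.derivWithin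
      (uniqueDiffOn_uIcc ht.symm 0 Set.left_mem_uIcc), iteratedDeriv_succ, iteratedDeriv_zero,
    Real.deriv_exp, Real.exp_zero, sub_zero, pow_zero, pow_one, Nat.factorial, Nat.cast_one,
    inv_one, one_mul, smul_eq_mul, mul_one, zero_add] at hrem
  have hxc : Real.exp x ≤ Real.exp c := Real.exp_le_exp.2 (hx.2.le.trans (max_le hc htc))
  rw [sub_sub, hrem, mul_div_assoc, mul_comm]
  exact mul_le_mul_of_nonneg_left hxc (div_nonneg (sq_nonneg t) zero_le_two)

section Gibbs

/-! Here `p = q * exp d` has the mass of `q`, so `d = log (p / q)`; the first two lemmas say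
`KL(q ‖ p) ≥ 0` and `KL(p ‖ q) ≥ 0`. -/

variable {ι : Type*} [Fintype ι] {q d : ι → ℝ}

theorem sum_mul_nonpos_of_sum_mul_exp_eq (hq : ∀ i, 0 ≤ q i)
    (hqd : ∑ i, q i * Real.exp (d i) = ∑ i, q i) : ∑ i, q i * d i ≤ 0 := by
  have : ∑ i, q i * (d i + 1) ≤ ∑ i, q i * Real.exp (d i) :=
    sum_le_sum fun i _ => mul_le_mul_of_nonneg_left (Real.add_one_le_exp _) (hq i)
  simp only [mul_add, mul_one, sum_add_distrib] at this
  linarith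

theorem sum_mul_exp_mul_nonneg_of_sum_mul_exp_eq (hq : ∀ i, 0 ≤ q i)
    (hqd : ∑ i, q i * Real.exp (d i) = ∑ i, q i) : 0 ≤ ∑ i, q i * Real.exp (d i) * d i := by
  have : ∑ i, q i * Real.exp (d i) * (1 - d i) ≤ ∑ i, q i := sum_le_sum fun i _ => by
    calc q i * Real.exp (d i) * (1 - d i)
        ≤ q i * Real.exp (d i) * Real.exp (-d i) :=
          mul_le_mul_of_nonneg_left (by linarith [Real.add_one_le_exp (-d i)])
            (mul_nonneg (hq i) (Real.exp_pos _).le)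
      _ = q i := by rw [mul_assoc, ← Real.exp_add, add_neg_cancel, Real.exp_zero, mul_one]
  simp only [mul_sub, mul_one, sum_sub_distrib, hqd] at this
  linarith

theorem neg_sum_mul_le_of_sum_mul_exp_eq {c : ℝ} (hq : ∀ i, 0 ≤ q i)
    (hqd : ∑ i, q i * Real.exp (d i) = ∑ i, q i) (hdc : ∀ i, d i ≤ c) (hc : 0 ≤ c) :
    -∑ i, q i * d i ≤ Real.exp c / 2 * ∑ i, q i * d i ^ 2 := by
  have : ∑ i, q i * (Real.exp (d i) - 1 - d i) ≤ ∑ i, q i * (d i ^ 2 / 2 * Real.exp c) :=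
    sum_le_sum fun i _ => mul_le_mul_of_nonneg_left (exp_sub_one_sub_le (hdc i) hc) (hq i)
  have hrhs : ∑ i, q i * (d i ^ 2 / 2 * Real.exp c) = Real.exp c / 2 * ∑ i, q i * d i ^ 2 := by
    rw [mul_sum]
    exact sum_congr rfl fun i _ => by ring
  simp only [mul_sub, mul_one, sum_sub_distrib, hqd] at this
  linarith

theorem sum_abs_mul_exp_sub_le_of_sum_mul_exp_eq (hq : ∀ i, 0 ≤ q i)
    (hqd : ∑ i, q i * Real.exp (d i) = ∑ i, q i) :
    ∑ i, |q i * Real.exp (d i) - q i| ≤ 2 * ∑ i, q i * |d i| := by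
  -- the positive and negative parts of `p - q` have the same mass
  have hpt : ∀ i, |q i * Real.exp (d i) - q i| ≤
      (q i * Real.exp (d i) - q i) + 2 * (q i * |d i|) := by
    intro i
    have h1 : 1 - Real.exp (d i) ≤ |d i| := by
      linarith [Real.add_one_le_exp (d i), neg_abs_le (d i)]
    have h2 := mul_le_mul_of_nonneg_left h1 (hq i)
    have h3 := mul_nonneg (hq i) (abs_nonneg (d i))
    rw [abs_sub_le_iff]
    constructor <;> nlinarith
  calc ∑ i, |q i * Real.exp (d i) - q i|
      ≤ ∑ i, ((q i * Real.exp (d i) - q i) + 2 * (q i * |d i|)) := sum_le_sum fun i _ => hpt i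
    _ = 2 * ∑ i, q i * |d i| := by rw [sum_add_distrib, sum_sub_distrib, hqd, mul_sum]; ring

/-- `hexp` says that `z = η⁻¹ log ∑ i, q i * exp (η * g i)`. -/
theorem abs_le_exp_mul_sum_of_sum_mul_exp_eq_one {g u : ι → ℝ} {η z c : ℝ} (hη : 0 < η)
    (hc : 0 ≤ c) (hq : ∀ i, 0 ≤ q i) (hq1 : ∑ i, q i = 1)
    (hexp : ∑ i, q i * Real.exp (η * (g i - z)) = 1) (hgz : ∀ i, η * (g i - z) ≤ c)
    (hgu : ∀ i, |g i| ≤ u i) :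
    |z| ≤ Real.exp c * ∑ i, q i * u i := by
  have hqd : ∑ i, q i * Real.exp (η * (g i - z)) = ∑ i, q i := hexp.trans hq1.symm
  have hu : ∀ i, 0 ≤ u i := fun i => (abs_nonneg _).trans (hgu i)
  have hsum_u : 0 ≤ ∑ i, q i * u i := sum_nonneg fun i _ => mul_nonneg (hq i) (hu i)
  have hec : 1 ≤ Real.exp c := Real.one_le_exp hc
  have hlow : ∑ i, q i * g i ≤ z := by
    have h := sum_mul_nonpos_of_sum_mul_exp_eq hq hqd
    have e : ∑ i, q i * (η * (g i - z)) = η * (∑ i, q i * g i - z * ∑ i, q i) := by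
      rw [mul_sum _ _ z, ← sum_sub_distrib, mul_sum]
      exact sum_congr rfl fun i _ => by ring
    rw [e, hq1, mul_one] at h
    nlinarith
  have hup : z ≤ ∑ i, q i * Real.exp (η * (g i - z)) * g i := by
    have h := sum_mul_exp_mul_nonneg_of_sum_mul_exp_eq hq hqd
    have e : ∑ i, q i * Real.exp (η * (g i - z)) * (η * (g i - z)) =
        η * (∑ i, q i * Real.exp (η * (g i - z)) * g i -
          z * ∑ i, q i * Real.exp (η * (g i - z))) := by
      rw [mul_sum _ _ z, ← sum_sub_distrib, mul_sum]
      exact sum_congr rfl fun i _ => by ring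
    rw [e, hexp, mul_one] at h
    nlinarith
  rw [abs_le]
  constructor
  · have : -∑ i, q i * u i ≤ ∑ i, q i * g i := by
      rw [← sum_neg_distrib]
      exact sum_le_sum fun i _ => by nlinarith [neg_abs_le (g i), hgu i, hq i]
    nlinarith
  · refine hup.trans ?_
    rw [mul_sum]
    refine sum_le_sum fun i _ => ?_
    calc q i * Real.exp (η * (g i - z)) * g i ≤ q i * Real.exp (η * (g i - z)) * u i :=
          mul_le_mul_of_nonneg_left ((le_abs_self _).trans (hgu i))
            (mul_nonneg (hq i) (Real.exp_pos _).le)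
      _ ≤ q i * Real.exp c * u i := mul_le_mul_of_nonneg_right
          (mul_le_mul_of_nonneg_left (Real.exp_le_exp.2 (hgz i)) (hq i)) (hu i)
      _ = Real.exp c * (q i * u i) := by ring

end Gibbs

theorem sum_mul_add_sq_le {ι : Type*} (s : Finset ι) {w x y : ι → ℝ} {a b : ℝ}
    (hw : ∀ i ∈ s, 0 ≤ w i) (ha : 0 ≤ a) (hb : 0 ≤ b)
    (hx : ∑ i ∈ s, w i * x i ^ 2 ≤ a ^ 2) (hy : ∑ i ∈ s, w i * y i ^ 2 ≤ b ^ 2) :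
    ∑ i ∈ s, w i * (x i + y i) ^ 2 ≤ (a + b) ^ 2 := by
  have hx0 : 0 ≤ ∑ i ∈ s, w i * x i ^ 2 := sum_nonneg fun i hi => mul_nonneg (hw i hi) (sq_nonneg _)
  have hy0 : 0 ≤ ∑ i ∈ s, w i * y i ^ 2 := sum_nonneg fun i hi => mul_nonneg (hw i hi) (sq_nonneg _)
  have hcs : (∑ i ∈ s, w i * x i * y i) ^ 2 ≤ (a * b) ^ 2 :=
    calc (∑ i ∈ s, w i * x i * y i) ^ 2
        ≤ (∑ i ∈ s, w i * x i ^ 2) * ∑ i ∈ s, w i * y i ^ 2 :=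
          sum_sq_le_sum_mul_sum_of_sq_le_mul s (fun i hi => mul_nonneg (hw i hi) (sq_nonneg _))
            (fun i hi => mul_nonneg (hw i hi) (sq_nonneg _)) fun i _ => le_of_eq (by ring)
      _ ≤ a ^ 2 * b ^ 2 := mul_le_mul hx hy hy0 (sq_nonneg a)
      _ = (a * b) ^ 2 := by ring
  have hxy := (abs_le_of_sq_le_sq' hcs (mul_nonneg ha hb)).2
  have hexpand : ∑ i ∈ s, w i * (x i + y i) ^ 2 =
      ∑ i ∈ s, w i * x i ^ 2 + 2 * ∑ i ∈ s, w i * x i * y i + ∑ i ∈ s, w i * y i ^ 2 := by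
    rw [mul_sum, ← sum_add_distrib, ← sum_add_distrib]
    exact sum_congr rfl fun i _ => by ring
  rw [hexpand]
  nlinarith

theorem effH_nonneg {x : ℝ} (hx : 0 ≤ x) (n : ℕ) : 0 ≤ effH n x :=
  sum_nonneg fun i _ => pow_nonneg hx i

theorem effH_le_effH {x : ℝ} (hx : 0 ≤ x) {m n : ℕ} (hmn : m ≤ n) : effH m x ≤ effH n x :=
  sum_le_sum_of_subset_of_nonneg (range_subset_range.2 hmn) fun i _ _ => pow_nonneg hx i

theorem le_sum_Ico_pow_mul_of_le_add_mul {H : ℕ} {γ : ℝ} (hγ : 0 ≤ γ) {w b : ℕ → ℝ}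
    (hwH : w H ≤ 0) (hw : ∀ h < H, w h ≤ b h + γ * w (h + 1)) {h : ℕ} (hh : h ≤ H) :
    w h ≤ ∑ l ∈ Ico h H, γ ^ (l - h) * b l := by
  induction hh using Nat.decreasingInduction with
  | self => simpa using hwH
  | of_succ k hk ih =>
    rw [sum_eq_sum_Ico_succ_bot hk, Nat.sub_self, pow_zero, one_mul]
    have hshift : γ * ∑ l ∈ Ico (k + 1) H, γ ^ (l - (k + 1)) * b l =
        ∑ l ∈ Ico (k + 1) H, γ ^ (l - k) * b l := by
      rw [mul_sum]
      refine sum_congr rfl fun l hl => ?_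
      rw [show l - k = l - (k + 1) + 1 by have := (mem_Ico.1 hl).1; omega, pow_succ]
      ring
    linarith [hw k hk, mul_le_mul_of_nonneg_left ih hγ]

theorem sum_range_le_effH_mul_sum_of_le_add_mul {H : ℕ} {γ : ℝ} (hγ : 0 ≤ γ) {w b : ℕ → ℝ}
    (hb : ∀ h < H, 0 ≤ b h) (hwH : w H ≤ 0) (hw : ∀ h < H, w h ≤ b h + γ * w (h + 1)) :
    ∑ h ∈ range H, w h ≤ effH H γ * ∑ h ∈ range H, b h := by
  calc ∑ h ∈ range H, w h
      ≤ ∑ h ∈ Ico 0 H, ∑ l ∈ Ico h H, γ ^ (l - h) * b l := by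
        rw [range_eq_Ico]
        exact sum_le_sum fun h hh =>
          le_sum_Ico_pow_mul_of_le_add_mul hγ hwH hw (mem_Ico.1 hh).2.le
    _ = ∑ l ∈ range H, effH (l + 1) γ * b l := by
        rw [sum_Ico_Ico_comm, ← range_eq_Ico]
        refine sum_congr rfl fun l _ => ?_
        rw [← range_eq_Ico, ← sum_mul, effH, ← sum_range_reflect]
        exact congrArg (· * b l)
          (sum_congr rfl fun i hi => by have := mem_range.1 hi; congr 1; omega)
    _ ≤ effH H γ * ∑ h ∈ range H, b h := by
        rw [mul_sum]
        exact sum_le_sum fun l hl => mul_le_mul_of_nonneg_right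
          (effH_le_effH hγ (mem_range.1 hl)) (hb l (mem_range.1 hl))

section Trajectory

variable {S A B : Type} [Fintype A] {H : ℕ}
  {rho0 : S → ℝ} {pol : ℕ → S → B → A → ℝ} {nu : ℕ → S → B → ℝ} {P : ℕ → S → A → B → S → ℝ}

theorem pPol_nonneg (hpol0 : ∀ h < H, ∀ s b a, 0 ≤ pol h s b a)
    (hP0 : ∀ h < H, ∀ s a b s', 0 ≤ P h s a b s') {h : ℕ} (hh : h < H) (s : S) (b : B)
    (s' : S) : 0 ≤ pPol pol P h s b s' :=
  sum_nonneg fun a _ => mul_nonneg (hpol0 h hh s b a) (hP0 h hh s a b s')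

theorem sum_pPol_eq_one [Fintype S] (hpol1 : ∀ h < H, ∀ s b, ∑ a, pol h s b a = 1)
    (hP1 : ∀ h < H, ∀ s a b, ∑ s', P h s a b s' = 1) {h : ℕ} (hh : h < H) (s : S) (b : B) :
    ∑ s', pPol pol P h s b s' = 1 := by
  simp only [pPol]
  rw [sum_comm]
  simp only [← mul_sum, hP1 h hh, mul_one, hpol1 h hh]

variable [Fintype S] [Fintype B]

variable (rho0 pol nu P) in
/-- `E^{π,ν}[f(s_h, b_h)]`. -/
def stepMean (h : ℕ) (f : S → B → ℝ) : ℝ :=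
  ∑ s, ∑ b, margS rho0 pol nu P h s * nu h s b * f s b

theorem stepMean_eq (h : ℕ) (f : S → B → ℝ) :
    stepMean rho0 pol nu P h f = ∑ s, margS rho0 pol nu P h s * ∑ b, nu h s b * f s b := by
  simp only [stepMean, mul_sum, mul_assoc]

theorem margS_nonneg (hrho0 : ∀ s, 0 ≤ rho0 s) (hpol0 : ∀ h < H, ∀ s b a, 0 ≤ pol h s b a)
    (hnu0 : ∀ h s b, 0 ≤ nu h s b) (hP0 : ∀ h < H, ∀ s a b s', 0 ≤ P h s a b s')
    {h : ℕ} (hh : h ≤ H) (s : S) : 0 ≤ margS rho0 pol nu P h s := by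
  induction h generalizing s with
  | zero => exact hrho0 s
  | succ h ih =>
    have hlt : h < H := hh
    exact sum_nonneg fun s' _ => sum_nonneg fun b _ => sum_nonneg fun a _ =>
      mul_nonneg (mul_nonneg (mul_nonneg (ih hlt.le s') (hnu0 h s' b)) (hpol0 h hlt s' b a))
        (hP0 h hlt s' a b s)

theorem stepMean_mono (hrho0 : ∀ s, 0 ≤ rho0 s) (hpol0 : ∀ h < H, ∀ s b a, 0 ≤ pol h s b a)
    (hnu0 : ∀ h s b, 0 ≤ nu h s b) (hP0 : ∀ h < H, ∀ s a b s', 0 ≤ P h s a b s')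
    {h : ℕ} (hh : h ≤ H) {f g : S → B → ℝ} (hfg : ∀ s b, f s b ≤ g s b) :
    stepMean rho0 pol nu P h f ≤ stepMean rho0 pol nu P h g :=
  sum_le_sum fun s _ => sum_le_sum fun b _ => mul_le_mul_of_nonneg_left (hfg s b)
    (mul_nonneg (margS_nonneg hrho0 hpol0 hnu0 hP0 hh s) (hnu0 h s b))

theorem sum_margS_succ_mul (h : ℕ) (g : S → ℝ) :
    ∑ s', margS rho0 pol nu P (h + 1) s' * g s' =
      stepMean rho0 pol nu P h fun s b => ∑ s', pPol pol P h s b s' * g s' := by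
  simp only [margS, stepMean, pPol, sum_mul, mul_sum]
  rw [sum_comm]
  refine sum_congr rfl fun s _ => ?_
  rw [sum_comm]
  refine sum_congr rfl fun b _ => ?_
  exact sum_congr rfl fun s' _ => sum_congr rfl fun a _ => by ring

variable {γ : ℝ} {X : ℕ → S → B → ℝ}

theorem cumSB_self (s : S) (b : B) : cumSB γ H pol nu P X H s b = 0 := by
  simp [cumSB, cumAux]

theorem cumSB_of_lt {h : ℕ} (hh : h < H) (s : S) (b : B) :
    cumSB γ H pol nu P X h s b = X h s b + γ * ∑ s', pPol pol P h s b s' *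
      ∑ b', nu (h + 1) s' b' * cumSB γ H pol nu P X (h + 1) s' b' := by
  obtain ⟨n, hn⟩ : ∃ n, H - h = n + 1 := ⟨H - h - 1, by omega⟩
  have hsub : H - (h + 1) = n := by omega
  simp only [cumSB, hn, hsub, cumAux, show H - (n + 1) = h by omega, show H - n = h + 1 by omega,
    pPol, sum_mul, mul_sum]
  congr 1
  rw [sum_comm]
  refine sum_congr rfl fun s' _ => ?_
  rw [sum_comm]
  exact sum_congr rfl fun b' _ => sum_congr rfl fun a _ => by ring

theorem stepMean_const_mul (h : ℕ) (c : ℝ) (f : S → B → ℝ) :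
    stepMean rho0 pol nu P h (fun s b => c * f s b) = c * stepMean rho0 pol nu P h f := by
  simp only [stepMean, mul_sum]
  exact sum_congr rfl fun s _ => sum_congr rfl fun b _ => by ring

theorem stepMean_add_sq_le (hrho0 : ∀ s, 0 ≤ rho0 s)
    (hpol0 : ∀ h < H, ∀ s b a, 0 ≤ pol h s b a) (hnu0 : ∀ h s b, 0 ≤ nu h s b)
    (hP0 : ∀ h < H, ∀ s a b s', 0 ≤ P h s a b s') {h : ℕ} (hh : h ≤ H) {f g : S → B → ℝ}
    {x y : ℝ} (hx : 0 ≤ x) (hy : 0 ≤ y)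
    (hf : stepMean rho0 pol nu P h (fun s b => f s b ^ 2) ≤ x ^ 2)
    (hg : stepMean rho0 pol nu P h (fun s b => g s b ^ 2) ≤ y ^ 2) :
    stepMean rho0 pol nu P h (fun s b => (f s b + g s b) ^ 2) ≤ (x + y) ^ 2 := by
  simp only [stepMean, ← Fintype.sum_prod_type'] at hf hg ⊢
  exact sum_mul_add_sq_le univ (fun p _ =>
    mul_nonneg (margS_nonneg hrho0 hpol0 hnu0 hP0 hh p.1) (hnu0 h p.1 p.2)) hx hy hf hg

theorem sq_sum_pPol_mul_sum_cumSB_le (hpol0 : ∀ h < H, ∀ s b a, 0 ≤ pol h s b a)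
    (hpol1 : ∀ h < H, ∀ s b, ∑ a, pol h s b a = 1) (hnu0 : ∀ h s b, 0 ≤ nu h s b)
    (hnu1 : ∀ h < H, ∀ s, ∑ b, nu h s b = 1) (hP0 : ∀ h < H, ∀ s a b s', 0 ≤ P h s a b s')
    (hP1 : ∀ h < H, ∀ s a b, ∑ s', P h s a b s' = 1) {h : ℕ} (hh : h < H) (s : S) (b : B) :
    (∑ s', pPol pol P h s b s' * ∑ b', nu (h + 1) s' b' * cumSB γ H pol nu P X (h + 1) s' b') ^ 2
      ≤ ∑ s', pPol pol P h s b s' *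
          ∑ b', nu (h + 1) s' b' * cumSB γ H pol nu P X (h + 1) s' b' ^ 2 := by
  refine (Real.pow_arith_mean_le_arith_mean_pow_of_even univ _ _
    (fun s' _ => pPol_nonneg hpol0 hP0 hh s b s') (sum_pPol_eq_one hpol1 hP1 hh s b)
    even_two).trans
    (sum_le_sum fun s' _ => mul_le_mul_of_nonneg_left ?_ (pPol_nonneg hpol0 hP0 hh s b s'))
  rcases (Nat.succ_le_of_lt hh).lt_or_eq with hh1 | hh1
  · exact Real.pow_arith_mean_le_arith_mean_pow_of_even univ _ _ (fun b' _ => hnu0 _ s' b')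
      (hnu1 _ hh1 s') even_two
  · simp [show h + 1 = H from hh1, cumSB_self]

theorem stepMean_cumSB_sq_le (hγ : 0 ≤ γ) (hrho0 : ∀ s, 0 ≤ rho0 s)
    (hpol0 : ∀ h < H, ∀ s b a, 0 ≤ pol h s b a) (hpol1 : ∀ h < H, ∀ s b, ∑ a, pol h s b a = 1)
    (hnu0 : ∀ h s b, 0 ≤ nu h s b) (hnu1 : ∀ h < H, ∀ s, ∑ b, nu h s b = 1)
    (hP0 : ∀ h < H, ∀ s a b s', 0 ≤ P h s a b s') (hP1 : ∀ h < H, ∀ s a b, ∑ s', P h s a b s' = 1)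
    {M : ℝ} (hM0 : 0 ≤ M) (hM : ∀ h < H, stepMean rho0 pol nu P h (fun s b => X h s b ^ 2) ≤ M)
    {h : ℕ} (hh : h ≤ H) :
    stepMean rho0 pol nu P h (fun s b => cumSB γ H pol nu P X h s b ^ 2) ≤
      effH (H - h) γ ^ 2 * M := by
  induction hh using Nat.decreasingInduction with
  | self => simp [cumSB_self, stepMean, effH]
  | of_succ k hk ih =>
    set U := cumSB γ H pol nu P X
    have hnext : stepMean rho0 pol nu P k (fun s b =>
        (γ * ∑ s', pPol pol P k s b s' * ∑ b', nu (k + 1) s' b' * U (k + 1) s' b') ^ 2) ≤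
        (γ * effH (H - (k + 1)) γ * Real.sqrt M) ^ 2 :=
      calc _ ≤ stepMean rho0 pol nu P k (fun s b =>
            γ ^ 2 * ∑ s', pPol pol P k s b s' * ∑ b', nu (k + 1) s' b' * U (k + 1) s' b' ^ 2) :=
            stepMean_mono hrho0 hpol0 hnu0 hP0 hk.le fun s b => by
              rw [mul_pow]
              exact mul_le_mul_of_nonneg_left
                (sq_sum_pPol_mul_sum_cumSB_le hpol0 hpol1 hnu0 hnu1 hP0 hP1 hk s b) (sq_nonneg γ)
        _ = γ ^ 2 * stepMean rho0 pol nu P (k + 1) (fun s b => U (k + 1) s b ^ 2) := by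
            rw [stepMean_const_mul, ← sum_margS_succ_mul, stepMean_eq]
        _ ≤ γ ^ 2 * (effH (H - (k + 1)) γ ^ 2 * M) := mul_le_mul_of_nonneg_left ih (sq_nonneg γ)
        _ = _ := by rw [mul_pow, mul_pow, Real.sq_sqrt hM0]; ring
    have hX : stepMean rho0 pol nu P k (fun s b => X k s b ^ 2) ≤ Real.sqrt M ^ 2 := by
      rw [Real.sq_sqrt hM0]; exact hM k hk
    have hsucc : effH (H - k) γ = 1 + γ * effH (H - (k + 1)) γ := by
      rw [effH, effH, show H - k = H - (k + 1) + 1 by omega, geom_sum_succ]; ring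
    have hU : (fun s b => U k s b ^ 2) = fun s b => (X k s b +
        γ * ∑ s', pPol pol P k s b s' * ∑ b', nu (k + 1) s' b' * U (k + 1) s' b') ^ 2 := by
      funext s b; exact congrArg (· ^ 2) (cumSB_of_lt hk s b)
    rw [hU]
    refine (stepMean_add_sq_le hrho0 hpol0 hnu0 hP0 hk.le (Real.sqrt_nonneg M)
      (mul_nonneg (mul_nonneg hγ (effH_nonneg hγ _)) (Real.sqrt_nonneg M)) hX hnext).trans_eq ?_
    rw [hsucc]
    linear_combination (1 + γ * effH (H - (k + 1)) γ) ^ 2 * Real.sq_sqrt hM0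

end Trajectory

theorem sum_exp_mul_sub_inv_mul_log_sum_exp {ι : Type*} [Fintype ι] [Nonempty ι] {η : ℝ}
    (hη : η ≠ 0) (f : ι → ℝ) :
    ∑ i, Real.exp (η * (f i - η⁻¹ * Real.log (∑ j, Real.exp (η * f j)))) = 1 := by
  have hpos : 0 < ∑ j, Real.exp (η * f j) := sum_pos (fun _ _ => Real.exp_pos _) univ_nonempty
  simp only [mul_sub, Real.exp_sub, ← sum_div, mul_inv_cancel_left₀ hη, Real.exp_log hpos,
    div_self hpos.ne']

section QuantalResponse

variable {S A B : Type} [Fintype B] {η γ : ℝ} {H : ℕ}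

theorem sum_nuTil_eq_one [Nonempty B] {Qt : ℕ → S → B → ℝ} (hη : η ≠ 0) {h : ℕ} (hh : h < H)
    (s : S) :
    ∑ b, nuTil η H Qt h s b = 1 := by
  simp only [nuTil, aTil, vTil, if_pos hh]
  exact sum_exp_mul_sub_inv_mul_log_sum_exp hη _

variable [Fintype S] [Fintype A]
  {pol : ℕ → S → B → A → ℝ} {r : ℕ → S → A → B → ℝ} {P : ℕ → S → A → B → S → ℝ}
  {Qt : ℕ → S → B → ℝ}

theorem softV_of_lt {h : ℕ} (hh : h < H) (s : S) :
    softV η γ H pol r P h s = η⁻¹ * Real.log (∑ b, Real.exp (η * softQ η γ H pol r P h s b)) := by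
  obtain ⟨n, hn⟩ : ∃ n, H - h = n + 1 := ⟨H - h - 1, by omega⟩
  simp only [softV, softQ, hn, vAux, show H - (n + 1) = h by omega,
    show H - (h + 1) = n by omega]

theorem softV_self (s : S) : softV η γ H pol r P H s = 0 := by
  simp [softV, vAux]

theorem qr_pos (h : ℕ) (s : S) (b : B) : 0 < qr η γ H pol r P h s b := Real.exp_pos _

theorem sum_qr_eq_one [Nonempty B] (hη : η ≠ 0) {h : ℕ} (hh : h < H) (s : S) :
    ∑ b, qr η γ H pol r P h s b = 1 := by
  simp only [qr, softA, softV_of_lt hh]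
  exact sum_exp_mul_sub_inv_mul_log_sum_exp hη _

variable (η γ H pol r P Qt) in
def valueGap (h : ℕ) (s : S) : ℝ := vTil η H Qt h s - softV η γ H pol r P h s

variable (η γ H pol r P Qt) in
def advGap (h : ℕ) (s : S) (b : B) : ℝ := aTil η H Qt h s b - softA η γ H pol r P h s b

variable (η γ H pol r P Qt) in
/-- The second-order part of the value gap: by `valueGapRemainder_eq` it accumulates the
nonnegative terms `-E_ν[advGap]`. -/
def valueGapRemainder (h : ℕ) (s : S) : ℝ :=
  valueGap η γ H pol r P Qt h s - ∑ b, qr η γ H pol r P h s b *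
    cumSB γ H pol (qr η γ H pol r P) P (bres η γ H pol r P Qt) h s b

variable (η γ H pol r P Qt) in
/-- The discount is inflated by `exp (2 η BA)`, the bound on the density ratio `ν̃ / ν`. -/
def absResReturn (BA : ℝ) (h : ℕ) (s : S) (b : B) : ℝ :=
  cumSB (Real.exp (2 * η * BA) * γ) H pol (qr η γ H pol r P) P
    (fun l s b => |bres η γ H pol r P Qt l s b|) h s b

theorem nuTil_eq_qr_mul_exp (h : ℕ) (s : S) (b : B) :
    nuTil η H Qt h s b = qr η γ H pol r P h s b * Real.exp (η * advGap η γ H pol r P Qt h s b) := by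
  rw [nuTil, qr, advGap, ← Real.exp_add]
  ring_nf

theorem valueGap_self (s : S) : valueGap η γ H pol r P Qt H s = 0 := by
  simp [valueGap, vTil, softV_self]

theorem sub_softQ_eq (h : ℕ) (s : S) (b : B) :
    Qt h s b - softQ η γ H pol r P h s b = bres η γ H pol r P Qt h s b +
      γ * ∑ s', pPol pol P h s b s' * valueGap η γ H pol r P Qt (h + 1) s' := by
  simp only [bres, softQ, valueGap, mul_sub, sum_sub_distrib]
  ring

theorem advGap_eq_sub (h : ℕ) (s : S) (b : B) :
    advGap η γ H pol r P Qt h s b =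
      (Qt h s b - softQ η γ H pol r P h s b) - valueGap η γ H pol r P Qt h s := by
  simp only [advGap, aTil, softA, valueGap]
  ring

theorem abs_advGap_le {BA : ℝ} (hA : ∀ h < H, ∀ s b, |softA η γ H pol r P h s b| ≤ BA)
    (hAt : ∀ h < H, ∀ s b, |aTil η H Qt h s b| ≤ BA) {h : ℕ} (hh : h < H) (s : S) (b : B) :
    |advGap η γ H pol r P Qt h s b| ≤ 2 * BA :=
  (abs_sub _ _).trans (by linarith [hA h hh s b, hAt h hh s b])

theorem sum_qr_mul_exp_advGap [Nonempty B] (hη : η ≠ 0) {h : ℕ} (hh : h < H) (s : S) :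
    ∑ b, qr η γ H pol r P h s b * Real.exp (η * advGap η γ H pol r P Qt h s b) =
      ∑ b, qr η γ H pol r P h s b := by
  simp only [← nuTil_eq_qr_mul_exp, sum_nuTil_eq_one hη hh, sum_qr_eq_one hη hh]

theorem sum_qr_mul_advGap_nonpos [Nonempty B] (hη : 0 < η) {h : ℕ} (hh : h < H) (s : S) :
    ∑ b, qr η γ H pol r P h s b * advGap η γ H pol r P Qt h s b ≤ 0 := by
  have hgibbs : ∑ b, qr η γ H pol r P h s b * (η * advGap η γ H pol r P Qt h s b) ≤ 0 :=
    sum_mul_nonpos_of_sum_mul_exp_eq (fun b => (qr_pos h s b).le)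
      (sum_qr_mul_exp_advGap hη.ne' hh s)
  simp only [mul_left_comm _ η, ← mul_sum] at hgibbs
  exact nonpos_of_mul_nonpos_right hgibbs hη

theorem neg_sum_qr_mul_advGap_le [Nonempty B] (hη : 0 < η) {BA : ℝ} (hBA : 0 ≤ BA)
    (hA : ∀ h < H, ∀ s b, |softA η γ H pol r P h s b| ≤ BA)
    (hAt : ∀ h < H, ∀ s b, |aTil η H Qt h s b| ≤ BA) {h : ℕ} (hh : h < H) (s : S) :
    -∑ b, qr η γ H pol r P h s b * advGap η γ H pol r P Qt h s b ≤
      η / 2 * Real.exp (2 * η * BA) *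
        ∑ b, qr η γ H pol r P h s b * advGap η γ H pol r P Qt h s b ^ 2 := by
  have hgibbs := neg_sum_mul_le_of_sum_mul_exp_eq (c := 2 * η * BA) (fun b => (qr_pos h s b).le)
    (sum_qr_mul_exp_advGap hη.ne' hh s)
    (fun b => by
      nlinarith [le_abs_self (advGap η γ H pol r P Qt h s b), abs_advGap_le hA hAt hh s b])
    (by positivity)
  simp only [mul_pow, mul_left_comm _ η, mul_left_comm _ (η ^ 2), ← mul_sum] at hgibbs
  refine le_of_mul_le_mul_left ?_ hη
  linarith

theorem sum_abs_nuTil_sub_qr_le [Nonempty B] (hη : 0 < η) {h : ℕ} (hh : h < H) (s : S) :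
    ∑ b, |nuTil η H Qt h s b - qr η γ H pol r P h s b| ≤
      2 * η * ∑ b, qr η γ H pol r P h s b * |advGap η γ H pol r P Qt h s b| := by
  have hgibbs : ∑ b, |qr η γ H pol r P h s b * Real.exp (η * advGap η γ H pol r P Qt h s b) -
      qr η γ H pol r P h s b| ≤
      2 * ∑ b, qr η γ H pol r P h s b * |η * advGap η γ H pol r P Qt h s b| :=
    sum_abs_mul_exp_sub_le_of_sum_mul_exp_eq (fun b => (qr_pos h s b).le)
      (sum_qr_mul_exp_advGap hη.ne' hh s)
  simp only [← nuTil_eq_qr_mul_exp, abs_mul, abs_of_pos hη] at hgibbs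
  refine hgibbs.trans_eq ?_
  rw [mul_assoc, mul_sum _ _ η]
  exact congrArg (2 * ·) (sum_congr rfl fun b _ => by ring)

theorem abs_sub_softQ_le_of_succ (hγ : 0 ≤ γ) (hpol0 : ∀ h < H, ∀ s b a, 0 ≤ pol h s b a)
    (hP0 : ∀ h < H, ∀ s a b s', 0 ≤ P h s a b s') {BA : ℝ} {h : ℕ} (hh : h < H)
    (hnext : ∀ s', |valueGap η γ H pol r P Qt (h + 1) s'| ≤ Real.exp (2 * η * BA) *
      ∑ b', qr η γ H pol r P (h + 1) s' b' * absResReturn η γ H pol r P Qt BA (h + 1) s' b')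
    (s : S) (b : B) :
    |Qt h s b - softQ η γ H pol r P h s b| ≤ absResReturn η γ H pol r P Qt BA h s b := by
  have hU : absResReturn η γ H pol r P Qt BA h s b = |bres η γ H pol r P Qt h s b| +
      Real.exp (2 * η * BA) * γ * ∑ s', pPol pol P h s b s' *
        ∑ b', qr η γ H pol r P (h + 1) s' b' * absResReturn η γ H pol r P Qt BA (h + 1) s' b' :=
    cumSB_of_lt hh s b
  rw [sub_softQ_eq, hU, mul_comm (Real.exp _) γ, mul_assoc γ, mul_sum _ _ (Real.exp _)]
  refine (abs_add_le _ _).trans (add_le_add le_rfl ?_)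
  rw [abs_mul, abs_of_nonneg hγ]
  refine mul_le_mul_of_nonneg_left ((abs_sum_le_sum_abs _ _).trans (sum_le_sum fun s' _ => ?_)) hγ
  rw [abs_mul, abs_of_nonneg (pPol_nonneg hpol0 hP0 hh s b s'), mul_left_comm]
  exact mul_le_mul_of_nonneg_left (hnext s') (pPol_nonneg hpol0 hP0 hh s b s')

theorem abs_valueGap_le [Nonempty B] (hη : 0 < η) (hγ : 0 ≤ γ) {BA : ℝ} (hBA : 0 ≤ BA)
    (hA : ∀ h < H, ∀ s b, |softA η γ H pol r P h s b| ≤ BA)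
    (hAt : ∀ h < H, ∀ s b, |aTil η H Qt h s b| ≤ BA)
    (hpol0 : ∀ h < H, ∀ s b a, 0 ≤ pol h s b a) (hP0 : ∀ h < H, ∀ s a b s', 0 ≤ P h s a b s')
    {h : ℕ} (hh : h ≤ H) (s : S) :
    |valueGap η γ H pol r P Qt h s| ≤ Real.exp (2 * η * BA) *
      ∑ b, qr η γ H pol r P h s b * absResReturn η γ H pol r P Qt BA h s b := by
  induction hh using Nat.decreasingInduction generalizing s with
  | self => simp [valueGap_self, absResReturn, cumSB_self]
  | of_succ k hk ih =>
    refine abs_le_exp_mul_sum_of_sum_mul_exp_eq_one hη (by positivity) (fun b => (qr_pos k s b).le)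
      (sum_qr_eq_one hη.ne' hk s) ?_ (fun b => ?_) (abs_sub_softQ_le_of_succ hγ hpol0 hP0 hk ih s)
    · simp only [← advGap_eq_sub, ← nuTil_eq_qr_mul_exp]
      exact sum_nuTil_eq_one hη.ne' hk s
    · rw [← advGap_eq_sub]
      nlinarith [le_abs_self (advGap η γ H pol r P Qt k s b), abs_advGap_le hA hAt hk s b]

theorem abs_sub_softQ_le [Nonempty B] (hη : 0 < η) (hγ : 0 ≤ γ) {BA : ℝ} (hBA : 0 ≤ BA)
    (hA : ∀ h < H, ∀ s b, |softA η γ H pol r P h s b| ≤ BA)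
    (hAt : ∀ h < H, ∀ s b, |aTil η H Qt h s b| ≤ BA)
    (hpol0 : ∀ h < H, ∀ s b a, 0 ≤ pol h s b a) (hP0 : ∀ h < H, ∀ s a b s', 0 ≤ P h s a b s')
    {h : ℕ} (hh : h < H) (s : S) (b : B) :
    |Qt h s b - softQ η γ H pol r P h s b| ≤ absResReturn η γ H pol r P Qt BA h s b :=
  abs_sub_softQ_le_of_succ hγ hpol0 hP0 hh (abs_valueGap_le hη hγ hBA hA hAt hpol0 hP0 hh) s b

theorem sum_qr_mul_advGap_sq_le [Nonempty B] (hη : 0 < η) (hγ : 0 ≤ γ) {BA : ℝ} (hBA : 0 ≤ BA)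
    (hA : ∀ h < H, ∀ s b, |softA η γ H pol r P h s b| ≤ BA)
    (hAt : ∀ h < H, ∀ s b, |aTil η H Qt h s b| ≤ BA)
    (hpol0 : ∀ h < H, ∀ s b a, 0 ≤ pol h s b a) (hP0 : ∀ h < H, ∀ s a b s', 0 ≤ P h s a b s')
    {h : ℕ} (hh : h < H) (s : S) :
    ∑ b, qr η γ H pol r P h s b * advGap η γ H pol r P Qt h s b ^ 2 ≤
      4 * Real.exp (4 * η * BA) *
        ∑ b, qr η γ H pol r P h s b * absResReturn η γ H pol r P Qt BA h s b ^ 2 := by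
  set c := Real.exp (2 * η * BA)
  set q := qr η γ H pol r P h s
  set U := absResReturn η γ H pol r P Qt BA h s
  have hc : 1 ≤ c := Real.one_le_exp (by positivity)
  have hc2 : Real.exp (4 * η * BA) = c ^ 2 := by rw [← Real.exp_nat_mul]; ring_nf
  have hpt : ∀ b, advGap η γ H pol r P Qt h s b ^ 2 ≤
      2 * U b ^ 2 + 2 * c ^ 2 * (∑ b', q b' * U b') ^ 2 := by
    intro b
    have hD : |advGap η γ H pol r P Qt h s b| ≤ U b + c * ∑ b', q b' * U b' := by
      rw [advGap_eq_sub]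
      exact (abs_sub _ _).trans (add_le_add (abs_sub_softQ_le hη hγ hBA hA hAt hpol0 hP0 hh s b)
        (abs_valueGap_le hη hγ hBA hA hAt hpol0 hP0 hh.le s))
    nlinarith [sq_abs (advGap η γ H pol r P Qt h s b), abs_nonneg (advGap η γ H pol r P Qt h s b),
      sq_nonneg (U b - c * ∑ b', q b' * U b')]
  have hjensen : (∑ b, q b * U b) ^ 2 ≤ ∑ b, q b * U b ^ 2 :=
    Real.pow_arith_mean_le_arith_mean_pow_of_even univ _ _ (fun b _ => (qr_pos h s b).le)
      (sum_qr_eq_one hη.ne' hh s) even_two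
  have hU2 : 0 ≤ ∑ b, q b * U b ^ 2 :=
    sum_nonneg fun b _ => mul_nonneg (qr_pos h s b).le (sq_nonneg _)
  calc ∑ b, q b * advGap η γ H pol r P Qt h s b ^ 2
      ≤ ∑ b, q b * (2 * U b ^ 2 + 2 * c ^ 2 * (∑ b', q b' * U b') ^ 2) :=
        sum_le_sum fun b _ => mul_le_mul_of_nonneg_left (hpt b) (qr_pos h s b).le
    _ = 2 * ∑ b, q b * U b ^ 2 + 2 * c ^ 2 * (∑ b', q b' * U b') ^ 2 := by
        simp only [mul_add, sum_add_distrib, ← sum_mul, sum_qr_eq_one hη.ne' hh s, mul_sum, q]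
        ring_nf
    _ ≤ 4 * Real.exp (4 * η * BA) * ∑ b, q b * U b ^ 2 := by
        rw [hc2]
        nlinarith [mul_le_mul_of_nonneg_left hjensen (by positivity : (0 : ℝ) ≤ 2 * c ^ 2),
          mul_le_mul_of_nonneg_right (one_le_pow₀ hc : 1 ≤ c ^ 2) hU2]

theorem valueGapRemainder_self (s : S) : valueGapRemainder η γ H pol r P Qt H s = 0 := by
  simp [valueGapRemainder, valueGap_self, cumSB_self]

theorem advGap_eq_del1_add {h : ℕ} (hh : h < H) (s : S) (b : B) :
    advGap η γ H pol r P Qt h s b = del1 η γ H pol r P Qt h s b +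
      γ * ∑ s', pPol pol P h s b s' * valueGapRemainder η γ H pol r P Qt (h + 1) s' -
        valueGapRemainder η γ H pol r P Qt h s := by
  rw [advGap_eq_sub, sub_softQ_eq]
  simp only [del1, cumSB, valueGapRemainder]
  rw [← cumSB, cumSB_of_lt hh]
  simp only [cumSB, mul_sub, sum_sub_distrib]
  ring

theorem sum_qr_mul_del1 [Nonempty B] (hη : η ≠ 0) {h : ℕ} (hh : h < H) (s : S) :
    ∑ b, qr η γ H pol r P h s b * del1 η γ H pol r P Qt h s b = 0 := by
  simp only [del1, mul_sub, sum_sub_distrib, ← sum_mul, sum_qr_eq_one hη hh, one_mul, sub_self]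

theorem valueGapRemainder_eq [Nonempty B] (hη : η ≠ 0) {h : ℕ} (hh : h < H) (s : S) :
    valueGapRemainder η γ H pol r P Qt h s =
      -∑ b, qr η γ H pol r P h s b * advGap η γ H pol r P Qt h s b +
        γ * ∑ b, qr η γ H pol r P h s b *
          ∑ s', pPol pol P h s b s' * valueGapRemainder η γ H pol r P Qt (h + 1) s' := by
  simp only [advGap_eq_del1_add hh, mul_sub, mul_add, sum_sub_distrib, sum_add_distrib,
    sum_qr_mul_del1 hη hh, ← sum_mul, sum_qr_eq_one hη hh, mul_sum, mul_left_comm _ γ]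
  ring

theorem valueGapRemainder_nonneg [Nonempty B] (hη : 0 < η) (hγ : 0 ≤ γ)
    (hpol0 : ∀ h < H, ∀ s b a, 0 ≤ pol h s b a) (hP0 : ∀ h < H, ∀ s a b s', 0 ≤ P h s a b s')
    {h : ℕ} (hh : h ≤ H) (s : S) : 0 ≤ valueGapRemainder η γ H pol r P Qt h s := by
  induction hh using Nat.decreasingInduction generalizing s with
  | self => rw [valueGapRemainder_self]
  | of_succ k hk ih =>
    rw [valueGapRemainder_eq hη.ne' hk]
    exact add_nonneg (neg_nonneg.2 (sum_qr_mul_advGap_nonpos hη hk s))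
      (mul_nonneg hγ (sum_nonneg fun b _ => mul_nonneg (qr_pos k s b).le
        (sum_nonneg fun s' _ => mul_nonneg (pPol_nonneg hpol0 hP0 hk s b s') (ih s'))))

theorem sum_qr_mul_abs_advGap_le [Nonempty B] (hη : 0 < η) (hγ : 0 ≤ γ)
    (hpol0 : ∀ h < H, ∀ s b a, 0 ≤ pol h s b a) (hP0 : ∀ h < H, ∀ s a b s', 0 ≤ P h s a b s')
    {h : ℕ} (hh : h < H) (s : S) :
    ∑ b, qr η γ H pol r P h s b * |advGap η γ H pol r P Qt h s b| ≤
      ∑ b, qr η γ H pol r P h s b * |del1 η γ H pol r P Qt h s b| +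
        2 * valueGapRemainder η γ H pol r P Qt h s := by
  have hrec : valueGapRemainder η γ H pol r P Qt h s =
      -∑ b, qr η γ H pol r P h s b * advGap η γ H pol r P Qt h s b +
        γ * ∑ b, qr η γ H pol r P h s b *
          ∑ s', pPol pol P h s b s' * valueGapRemainder η γ H pol r P Qt (h + 1) s' :=
    valueGapRemainder_eq hη.ne' hh s
  have hnonpos : ∑ b, qr η γ H pol r P h s b * advGap η γ H pol r P Qt h s b ≤ 0 :=
    sum_qr_mul_advGap_nonpos hη hh s
  set W := valueGapRemainder η γ H pol r P Qt
  have hW : 0 ≤ W h s := valueGapRemainder_nonneg hη hγ hpol0 hP0 hh.le s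
  have hnext : ∀ b, 0 ≤ γ * ∑ s', pPol pol P h s b s' * W (h + 1) s' := fun b =>
    mul_nonneg hγ (sum_nonneg fun s' _ => mul_nonneg (pPol_nonneg hpol0 hP0 hh s b s')
      (valueGapRemainder_nonneg hη hγ hpol0 hP0 hh s'))
  have hpt : ∀ b, |advGap η γ H pol r P Qt h s b| ≤ |del1 η γ H pol r P Qt h s b| +
      (γ * ∑ s', pPol pol P h s b s' * W (h + 1) s' + W h s) := by
    intro b
    rw [advGap_eq_del1_add hh, add_sub_assoc]
    refine (abs_add_le _ _).trans (add_le_add le_rfl ((abs_sub _ _).trans_eq ?_))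
    rw [abs_of_nonneg (hnext b), abs_of_nonneg hW]
  calc ∑ b, qr η γ H pol r P h s b * |advGap η γ H pol r P Qt h s b|
      ≤ ∑ b, qr η γ H pol r P h s b * (|del1 η γ H pol r P Qt h s b| +
          (γ * ∑ s', pPol pol P h s b s' * W (h + 1) s' + W h s)) :=
        sum_le_sum fun b _ => mul_le_mul_of_nonneg_left (hpt b) (qr_pos h s b).le
    _ = ∑ b, qr η γ H pol r P h s b * |del1 η γ H pol r P Qt h s b| +
          (γ * ∑ b, qr η γ H pol r P h s b * ∑ s', pPol pol P h s b s' * W (h + 1) s' +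
            W h s) := by
        simp only [mul_add, sum_add_distrib, ← sum_mul, sum_qr_eq_one hη.ne' hh, one_mul]
        congr 2
        rw [mul_sum]
        exact sum_congr rfl fun b _ => by ring
    _ ≤ _ := by linarith

variable {rho0 : S → ℝ}

theorem stepMean_advGap_sq_le [Nonempty B] (hη : 0 < η) (hγ : 0 ≤ γ) {BA : ℝ} (hBA : 0 ≤ BA)
    (hA : ∀ h < H, ∀ s b, |softA η γ H pol r P h s b| ≤ BA)
    (hAt : ∀ h < H, ∀ s b, |aTil η H Qt h s b| ≤ BA) (hrho0 : ∀ s, 0 ≤ rho0 s)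
    (hpol0 : ∀ h < H, ∀ s b a, 0 ≤ pol h s b a) (hpol1 : ∀ h < H, ∀ s b, ∑ a, pol h s b a = 1)
    (hP0 : ∀ h < H, ∀ s a b s', 0 ≤ P h s a b s') (hP1 : ∀ h < H, ∀ s a b, ∑ s', P h s a b s' = 1)
    {M : ℝ} (hM0 : 0 ≤ M) (hM : ∀ h < H, stepMean rho0 pol (qr η γ H pol r P) P h
      (fun s b => bres η γ H pol r P Qt h s b ^ 2) ≤ M) {h : ℕ} (hh : h < H) :
    stepMean rho0 pol (qr η γ H pol r P) P h (fun s b => advGap η γ H pol r P Qt h s b ^ 2) ≤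
      4 * Real.exp (4 * η * BA) * effH H (Real.exp (2 * η * BA) * γ) ^ 2 * M := by
  have hκ : 0 ≤ Real.exp (2 * η * BA) * γ := mul_nonneg (Real.exp_pos _).le hγ
  have hnu0 : ∀ h s b, 0 ≤ qr η γ H pol r P h s b := fun h s b => (qr_pos h s b).le
  have hU : stepMean rho0 pol (qr η γ H pol r P) P h
      (fun s b => absResReturn η γ H pol r P Qt BA h s b ^ 2) ≤
      effH (H - h) (Real.exp (2 * η * BA) * γ) ^ 2 * M :=
    stepMean_cumSB_sq_le hκ hrho0 hpol0 hpol1 hnu0 (fun h hh s => sum_qr_eq_one hη.ne' hh s) hP0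
      hP1 hM0 (by simpa only [sq_abs] using hM) hh.le
  have heff : effH (H - h) (Real.exp (2 * η * BA) * γ) ^ 2 ≤
      effH H (Real.exp (2 * η * BA) * γ) ^ 2 :=
    pow_le_pow_left₀ (effH_nonneg hκ _) (effH_le_effH hκ (Nat.sub_le H h)) 2
  calc stepMean rho0 pol (qr η γ H pol r P) P h (fun s b => advGap η γ H pol r P Qt h s b ^ 2)
      ≤ ∑ s, margS rho0 pol (qr η γ H pol r P) P h s * (4 * Real.exp (4 * η * BA) *
          ∑ b, qr η γ H pol r P h s b * absResReturn η γ H pol r P Qt BA h s b ^ 2) := by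
        rw [stepMean_eq]
        exact sum_le_sum fun s _ => mul_le_mul_of_nonneg_left
          (sum_qr_mul_advGap_sq_le hη hγ hBA hA hAt hpol0 hP0 hh s)
          (margS_nonneg hrho0 hpol0 hnu0 hP0 hh.le s)
    _ = 4 * Real.exp (4 * η * BA) * stepMean rho0 pol (qr η γ H pol r P) P h
          (fun s b => absResReturn η γ H pol r P Qt BA h s b ^ 2) := by
        rw [stepMean_eq, mul_sum]
        exact sum_congr rfl fun s _ => by ring
    _ ≤ 4 * Real.exp (4 * η * BA) * (effH H (Real.exp (2 * η * BA) * γ) ^ 2 * M) :=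
        mul_le_mul_of_nonneg_left (hU.trans (mul_le_mul_of_nonneg_right heff hM0)) (by positivity)
    _ = _ := by ring

theorem mean_neg_sum_qr_mul_advGap_le [Nonempty B] (hη : 0 < η) (hγ : 0 ≤ γ) {BA : ℝ}
    (hBA : 0 ≤ BA) (hA : ∀ h < H, ∀ s b, |softA η γ H pol r P h s b| ≤ BA)
    (hAt : ∀ h < H, ∀ s b, |aTil η H Qt h s b| ≤ BA) (hrho0 : ∀ s, 0 ≤ rho0 s)
    (hpol0 : ∀ h < H, ∀ s b a, 0 ≤ pol h s b a) (hpol1 : ∀ h < H, ∀ s b, ∑ a, pol h s b a = 1)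
    (hP0 : ∀ h < H, ∀ s a b s', 0 ≤ P h s a b s') (hP1 : ∀ h < H, ∀ s a b, ∑ s', P h s a b s' = 1)
    {M : ℝ} (hM0 : 0 ≤ M) (hM : ∀ h < H, stepMean rho0 pol (qr η γ H pol r P) P h
      (fun s b => bres η γ H pol r P Qt h s b ^ 2) ≤ M) {h : ℕ} (hh : h < H) :
    ∑ s, margS rho0 pol (qr η γ H pol r P) P h s *
        -∑ b, qr η γ H pol r P h s b * advGap η γ H pol r P Qt h s b ≤
      2 * η * Real.exp (6 * η * BA) * effH H (Real.exp (2 * η * BA) * γ) ^ 2 * M := by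
  have hnu0 : ∀ h s b, 0 ≤ qr η γ H pol r P h s b := fun h s b => (qr_pos h s b).le
  calc ∑ s, margS rho0 pol (qr η γ H pol r P) P h s *
        -∑ b, qr η γ H pol r P h s b * advGap η γ H pol r P Qt h s b
      ≤ ∑ s, margS rho0 pol (qr η γ H pol r P) P h s * (η / 2 * Real.exp (2 * η * BA) *
          ∑ b, qr η γ H pol r P h s b * advGap η γ H pol r P Qt h s b ^ 2) :=
        sum_le_sum fun s _ => mul_le_mul_of_nonneg_left
          (neg_sum_qr_mul_advGap_le hη hBA hA hAt hh s) (margS_nonneg hrho0 hpol0 hnu0 hP0 hh.le s)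
    _ = η / 2 * Real.exp (2 * η * BA) * stepMean rho0 pol (qr η γ H pol r P) P h
          (fun s b => advGap η γ H pol r P Qt h s b ^ 2) := by
        rw [stepMean_eq, mul_sum]
        exact sum_congr rfl fun s _ => by ring
    _ ≤ η / 2 * Real.exp (2 * η * BA) *
          (4 * Real.exp (4 * η * BA) * effH H (Real.exp (2 * η * BA) * γ) ^ 2 * M) :=
        mul_le_mul_of_nonneg_left
          (stepMean_advGap_sq_le hη hγ hBA hA hAt hrho0 hpol0 hpol1 hP0 hP1 hM0 hM hh)
          (by positivity)
    _ = _ := by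
        rw [show 6 * η * BA = 2 * η * BA + 4 * η * BA by ring, Real.exp_add]
        ring

theorem sum_mean_valueGapRemainder_le [Nonempty B] (hη : 0 < η) (hγ : 0 ≤ γ) {BA : ℝ}
    (hBA : 0 ≤ BA) (hA : ∀ h < H, ∀ s b, |softA η γ H pol r P h s b| ≤ BA)
    (hAt : ∀ h < H, ∀ s b, |aTil η H Qt h s b| ≤ BA) (hrho0 : ∀ s, 0 ≤ rho0 s)
    (hpol0 : ∀ h < H, ∀ s b a, 0 ≤ pol h s b a) (hpol1 : ∀ h < H, ∀ s b, ∑ a, pol h s b a = 1)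
    (hP0 : ∀ h < H, ∀ s a b s', 0 ≤ P h s a b s') (hP1 : ∀ h < H, ∀ s a b, ∑ s', P h s a b s' = 1)
    {M : ℝ} (hM0 : 0 ≤ M) (hM : ∀ h < H, stepMean rho0 pol (qr η γ H pol r P) P h
      (fun s b => bres η γ H pol r P Qt h s b ^ 2) ≤ M) :
    ∑ h ∈ range H, ∑ s, margS rho0 pol (qr η γ H pol r P) P h s *
        valueGapRemainder η γ H pol r P Qt h s ≤
      effH H γ * (H * (2 * η * Real.exp (6 * η * BA) *
        effH H (Real.exp (2 * η * BA) * γ) ^ 2 * M)) := by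
  have hnu0 : ∀ h s b, 0 ≤ qr η γ H pol r P h s b := fun h s b => (qr_pos h s b).le
  refine (sum_range_le_effH_mul_sum_of_le_add_mul hγ
    (b := fun h => ∑ s, margS rho0 pol (qr η γ H pol r P) P h s *
      -∑ b, qr η γ H pol r P h s b * advGap η γ H pol r P Qt h s b)
    (fun h hh => sum_nonneg fun s _ => mul_nonneg (margS_nonneg hrho0 hpol0 hnu0 hP0 hh.le s)
      (neg_nonneg.2 (sum_qr_mul_advGap_nonpos hη hh s)))
    (by simp [valueGapRemainder_self]) (fun h hh => le_of_eq ?_)).trans ?_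
  · simp only [valueGapRemainder_eq hη.ne' hh, mul_add, sum_add_distrib, sum_margS_succ_mul,
      stepMean_eq, mul_sum, mul_left_comm _ γ]
  · refine mul_le_mul_of_nonneg_left ?_ (effH_nonneg hγ H)
    refine (sum_le_sum fun h hh => mean_neg_sum_qr_mul_advGap_le hη hγ hBA hA hAt hrho0 hpol0
      hpol1 hP0 hP1 hM0 hM (mem_range.1 hh)).trans_eq ?_
    simp

theorem mean_sum_abs_nuTil_sub_qr_le [Nonempty B] (hη : 0 < η) (hγ : 0 ≤ γ)
    (hrho0 : ∀ s, 0 ≤ rho0 s) (hpol0 : ∀ h < H, ∀ s b a, 0 ≤ pol h s b a)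
    (hP0 : ∀ h < H, ∀ s a b s', 0 ≤ P h s a b s') {h : ℕ} (hh : h < H) :
    ∑ s, margS rho0 pol (qr η γ H pol r P) P h s *
        ∑ b, |nuTil η H Qt h s b - qr η γ H pol r P h s b| ≤
      2 * η * (stepMean rho0 pol (qr η γ H pol r P) P h
          (fun s b => |del1 η γ H pol r P Qt h s b|) +
        2 * ∑ s, margS rho0 pol (qr η γ H pol r P) P h s *
          valueGapRemainder η γ H pol r P Qt h s) := by
  have hnu0 : ∀ h s b, 0 ≤ qr η γ H pol r P h s b := fun h s b => (qr_pos h s b).le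
  calc ∑ s, margS rho0 pol (qr η γ H pol r P) P h s *
        ∑ b, |nuTil η H Qt h s b - qr η γ H pol r P h s b|
      ≤ ∑ s, margS rho0 pol (qr η γ H pol r P) P h s * (2 * η *
          (∑ b, qr η γ H pol r P h s b * |del1 η γ H pol r P Qt h s b| +
            2 * valueGapRemainder η γ H pol r P Qt h s)) :=
        sum_le_sum fun s _ => mul_le_mul_of_nonneg_left ((sum_abs_nuTil_sub_qr_le hη hh s).trans
          (mul_le_mul_of_nonneg_left (sum_qr_mul_abs_advGap_le hη hγ hpol0 hP0 hh s)
            (by positivity))) (margS_nonneg hrho0 hpol0 hnu0 hP0 hh.le s)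
    _ = _ := by
        rw [stepMean_eq, mul_sum _ _ (2 : ℝ), ← sum_add_distrib, mul_sum]
        exact sum_congr rfl fun s _ => by ring

theorem sum_mean_abs_nuTil_sub_qr_le [Nonempty B] (hη : 0 < η) (hγ : 0 ≤ γ) {BA : ℝ}
    (hBA : 0 ≤ BA) (hA : ∀ h < H, ∀ s b, |softA η γ H pol r P h s b| ≤ BA)
    (hAt : ∀ h < H, ∀ s b, |aTil η H Qt h s b| ≤ BA) (hrho0 : ∀ s, 0 ≤ rho0 s)
    (hpol0 : ∀ h < H, ∀ s b a, 0 ≤ pol h s b a) (hpol1 : ∀ h < H, ∀ s b, ∑ a, pol h s b a = 1)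
    (hP0 : ∀ h < H, ∀ s a b s', 0 ≤ P h s a b s') (hP1 : ∀ h < H, ∀ s a b, ∑ s', P h s a b s' = 1)
    {M : ℝ} (hM0 : 0 ≤ M) (hM : ∀ h < H, stepMean rho0 pol (qr η γ H pol r P) P h
      (fun s b => bres η γ H pol r P Qt h s b ^ 2) ≤ M) :
    ∑ h ∈ range H, (H : ℝ) * ∑ s, margS rho0 pol (qr η γ H pol r P) P h s *
        ∑ b, |nuTil η H Qt h s b - qr η γ H pol r P h s b| ≤
      2 * η * H * ∑ h ∈ range H,
          stepMean rho0 pol (qr η γ H pol r P) P h (fun s b => |del1 η γ H pol r P Qt h s b|) +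
        2 * η ^ 2 * H ^ 2 * Real.exp (6 * η * BA) * (1 + 4 * effH H γ) *
          effH H (Real.exp (2 * η * BA) * γ) ^ 2 * M := by
  have hW := sum_mean_valueGapRemainder_le (Qt := Qt) hη hγ hBA hA hAt hrho0 hpol0 hpol1 hP0 hP1
    hM0 hM
  have hK : 0 ≤ η ^ 2 * (H : ℝ) ^ 2 * Real.exp (6 * η * BA) *
      effH H (Real.exp (2 * η * BA) * γ) ^ 2 * M := by positivity
  calc _ ≤ ∑ h ∈ range H, (H : ℝ) * (2 * η * (stepMean rho0 pol (qr η γ H pol r P) P h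
          (fun s b => |del1 η γ H pol r P Qt h s b|) + 2 * ∑ s, margS rho0 pol
            (qr η γ H pol r P) P h s * valueGapRemainder η γ H pol r P Qt h s)) :=
        sum_le_sum fun h hh => mul_le_mul_of_nonneg_left (mean_sum_abs_nuTil_sub_qr_le hη hγ
          hrho0 hpol0 hP0 (mem_range.1 hh)) (Nat.cast_nonneg H)
    _ = 2 * η * H * ∑ h ∈ range H, stepMean rho0 pol (qr η γ H pol r P) P h
          (fun s b => |del1 η γ H pol r P Qt h s b|) + 4 * η * H * ∑ h ∈ range H, ∑ s,
            margS rho0 pol (qr η γ H pol r P) P h s * valueGapRemainder η γ H pol r P Qt h s := by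
        rw [mul_sum, mul_sum, ← sum_add_distrib]
        exact sum_congr rfl fun h _ => by ring
    _ ≤ _ := by
        nlinarith [mul_le_mul_of_nonneg_left hW (by positivity : (0 : ℝ) ≤ 4 * η * H),
          effH_nonneg hγ H]

end QuantalResponse

end QSE

theorem response_model_error_farsighted_form_general
    {S A B : Type} [Fintype S] [Fintype A] [Fintype B]
    [Nonempty B]
    (H : ℕ) (hH : 1 ≤ H) (η γ : ℝ) (hη : 0 < η) (hγ0 : 0 ≤ γ)
    (rho0 : S → ℝ) (hrho0 : ∀ s, 0 ≤ rho0 s)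
    (P : ℕ → S → A → B → S → ℝ)
    (hP0 : ∀ h < H, ∀ s a b s', 0 ≤ P h s a b s')
    (hP1 : ∀ h < H, ∀ s a b, ∑ s', P h s a b s' = 1)
    (r : ℕ → S → A → B → ℝ)
    (pol : ℕ → S → B → A → ℝ)
    (hpol0 : ∀ h < H, ∀ s b a, 0 ≤ pol h s b a)
    (hpol1 : ∀ h < H, ∀ s b, ∑ a, pol h s b a = 1)
    (Qt : ℕ → S → B → ℝ)
    (BA : ℝ) (hBA : 0 < BA)
    (hA : ∀ h < H, ∀ s b, |softA η γ H pol r P h s b| ≤ BA)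
    (hAt : ∀ h < H, ∀ s b, |aTil η H Qt h s b| ≤ BA) :
    ∑ h ∈ Finset.range H, (H : ℝ) * ∑ s,
        margS rho0 pol (qr η γ H pol r P) P h s *
          ∑ b, |nuTil η H Qt h s b - qr η γ H pol r P h s b| ≤
      (2 * η * (H : ℝ)) *
        ∑ h ∈ Finset.range H, ∑ s, ∑ b,
          margS rho0 pol (qr η γ H pol r P) P h s * qr η γ H pol r P h s b *
            |del1 η γ H pol r P Qt h s b| +
      (2 * η ^ 2 * (H : ℝ) ^ 2 * Real.exp (6 * η * BA) * (1 + 4 * effH H γ) *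
          (effH H (Real.exp (2 * η * BA) * γ)) ^ 2) *
        (Finset.range H).sup' (Finset.nonempty_range_iff.mpr (Nat.one_le_iff_ne_zero.mp hH))
          (fun h => ∑ s, ∑ b,
            margS rho0 pol (qr η γ H pol r P) P h s * qr η γ H pol r P h s b *
              (bres η γ H pol r P Qt h s b) ^ 2) := by
  have hM : ∀ h < H, stepMean rho0 pol (qr η γ H pol r P) P h
      (fun s b => bres η γ H pol r P Qt h s b ^ 2) ≤
        (range H).sup' (nonempty_range_iff.2 (Nat.one_le_iff_ne_zero.1 hH)) fun h =>
          stepMean rho0 pol (qr η γ H pol r P) P h fun s b => bres η γ H pol r P Qt h s b ^ 2 :=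
    fun h hh => le_sup' (fun h => stepMean rho0 pol (qr η γ H pol r P) P h
      fun s b => bres η γ H pol r P Qt h s b ^ 2) (mem_range.2 hh)
  have hmean0 : 0 ≤ stepMean rho0 pol (qr η γ H pol r P) P 0
      (fun s b => bres η γ H pol r P Qt 0 s b ^ 2) :=
    sum_nonneg fun s _ => sum_nonneg fun b _ => mul_nonneg (mul_nonneg
      (margS_nonneg hrho0 hpol0 (fun h s b => (qr_pos h s b).le) hP0 (Nat.zero_le H) s)
      (qr_pos 0 s b).le) (sq_nonneg _)
  exact sum_mean_abs_nuTil_sub_qr_le hη hγ0 hBA.le hA hAt hrho0 hpol0 hpol1 hP0 hP1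
    (hmean0.trans (hM 0 hH)) hM

/-- Response model error, farsighted-form bound (steps 0-based: `h < H` corresponds to
`h+1 ∈ [H]` of the paper).  With `ν = ν^π` the quantal response of `π` and `ν̃` the
quantal response derived from the estimates `Q̃`:
`Σ_h H·E^{π,ν}[‖(ν̃_h − ν_h)(·|s_h)‖₁] ≤ C⁽⁰⁾ Σ_h E^{π,ν}[|Δ̃_h⁽¹⁾(s_h,b_h)|]
+ C⁽²⁾ max_h E^{π,ν}[((Q̃_h − r_h^π − γ P_h^π Ṽ_{h+1})(s_h,b_h))²]`,
where `C⁽⁰⁾ = 2ηH` and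
`C⁽²⁾ = 2η²H² exp(6ηB_A)(1 + 4 eff_H(γ))(eff_H(exp(2ηB_A)γ))²`. -/
theorem response_model_error_farsighted_form
    {S A B : Type} [Fintype S] [Fintype A] [Fintype B]
    [Nonempty S] [Nonempty A] [Nonempty B]
    (H : ℕ) (hH : 1 ≤ H) (η γ : ℝ) (hη : 0 < η) (hγ0 : 0 ≤ γ) (hγ1 : γ ≤ 1)
    (rho0 : S → ℝ) (hrho0 : ∀ s, 0 ≤ rho0 s) (hrho1 : ∑ s, rho0 s = 1)
    (P : ℕ → S → A → B → S → ℝ)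
    (hP0 : ∀ h < H, ∀ s a b s', 0 ≤ P h s a b s')
    (hP1 : ∀ h < H, ∀ s a b, ∑ s', P h s a b s' = 1)
    (r : ℕ → S → A → B → ℝ) (hr : ∀ h < H, ∀ s a b, r h s a b ∈ Set.Icc (0 : ℝ) 1)
    (pol : ℕ → S → B → A → ℝ)
    (hpol0 : ∀ h < H, ∀ s b a, 0 ≤ pol h s b a)
    (hpol1 : ∀ h < H, ∀ s b, ∑ a, pol h s b a = 1)
    (Qt : ℕ → S → B → ℝ)
    (BA : ℝ) (hBA : 0 < BA)
    (hA : ∀ h < H, ∀ s b, |softA η γ H pol r P h s b| ≤ BA)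
    (hAt : ∀ h < H, ∀ s b, |aTil η H Qt h s b| ≤ BA) :
    ∑ h ∈ Finset.range H, (H : ℝ) * ∑ s,
        margS rho0 pol (qr η γ H pol r P) P h s *
          ∑ b, |nuTil η H Qt h s b - qr η γ H pol r P h s b| ≤
      (2 * η * (H : ℝ)) *
        ∑ h ∈ Finset.range H, ∑ s, ∑ b,
          margS rho0 pol (qr η γ H pol r P) P h s * qr η γ H pol r P h s b *
            |del1 η γ H pol r P Qt h s b| +
      (2 * η ^ 2 * (H : ℝ) ^ 2 * Real.exp (6 * η * BA) * (1 + 4 * effH H γ) *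
          (effH H (Real.exp (2 * η * BA) * γ)) ^ 2) *
        (Finset.range H).sup' (Finset.nonempty_range_iff.mpr (Nat.one_le_iff_ne_zero.mp hH))
          (fun h => ∑ s, ∑ b,
            margS rho0 pol (qr η γ H pol r P) P h s * qr η γ H pol r P h s b *
              (bres η γ H pol r P Qt h s b) ^ 2) :=
  response_model_error_farsighted_form_general H hH η γ hη hγ0 rho0 hrho0 P hP0 hP1 r pol hpol0
    hpol1 Qt BA hBA hA hAt
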